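/- Let ω₁, ω₂, ω₃ ∈ [2, 4] and β ∈ [−1, 1] be fixed. Then the function g(α) = ∂⁴/∂α⁴ det M(ω, α, β) (the fourth derivative in α of the determinant of M(ω, α, β)) is convex in α on [−1, 1] and satisfies g(α) ≥ 0 for all α ∈ [−1, 1]. -/

import Mathlib

/-!
`det M(ω, α, β)` is an even sextic in `α` whose `α⁶`-coefficient is `¾ ω₁ ω₃`, so its fourth
derivative is `24 c₄ + 360 c₆ α²`, a convex parabola. The quartic coefficient splits as
`c₄ = ⅜ (12ω₃ + 2ω₁ω₂ - ω₁²ω₃) + ⅜ β² (12ω₁ + 2ω₂ω₃ - ω₃²ω₁)`, and both brackets are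
nonnegative for weights in `[2, 4]`.
-/

open Matrix

/-- The `3 × 3` symmetric matrix `M(ω, α, β)`. -/
noncomputable def Mmat (ω₁ ω₂ ω₃ α β : ℝ) : Matrix (Fin 3) (Fin 3) ℝ :=
  !![3 + 1 / 2 * ω₁ * α ^ 2 + 1 / 2 * ω₂ * β ^ 2, ω₁ * α, ω₂ * β;
     ω₁ * α, 1 / 2 * ω₁ + 3 * α ^ 2 + 1 / 2 * ω₃ * β ^ 2, ω₃ * α * β;
     ω₂ * β, ω₃ * α * β, 1 / 2 * ω₂ + 1 / 2 * ω₃ * α ^ 2 + 3 * β ^ 2]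

open Set

theorem iteratedDeriv_four_even_sextic (a b c d x : ℝ) :
    iteratedDeriv 4 (fun x => a + b * x ^ 2 + c * x ^ 4 + d * x ^ 6) x =
      24 * c + 360 * d * x ^ 2 := by
  rw [iteratedDeriv_fun_add (by fun_prop) (by fun_prop),
    iteratedDeriv_fun_add (by fun_prop) (by fun_prop), iteratedDeriv_const_add (by norm_num)]
  simp only [iteratedDeriv_const_mul_field, iteratedDeriv_pow]
  norm_num [Nat.descFactorial]
  ring

theorem convexOn_const_add_mul_sq (a : ℝ) {b : ℝ} (hb : 0 ≤ b) :
    ConvexOn ℝ univ (fun x : ℝ => a + b * x ^ 2) :=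
  (convexOn_const a convex_univ).add ((Even.convexOn_pow even_two).smul hb)

theorem sq_mul_le_twelve_mul_add_two_mul {a b c : ℝ} (ha₀ : 0 ≤ a) (ha₄ : a ≤ 4) (hb : 2 ≤ b)
    (hc₀ : 0 ≤ c) (hc₄ : c ≤ 4) : a ^ 2 * c ≤ 12 * c + 2 * a * b := by
  nlinarith [mul_nonneg (sub_nonneg.2 hc₄) (sq_nonneg a), mul_nonneg ha₀ (sub_nonneg.2 hb),
    mul_nonneg (sub_nonneg.2 ha₄) ha₀]

theorem det_Mmat (ω₁ ω₂ ω₃ α β : ℝ) :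
    (Mmat ω₁ ω₂ ω₃ α β).det =
      (9/2*ω₃*β^4 + 3/4*ω₂*ω₃*β^2 + 3/4*ω₂*ω₃*β^6 - 3/8*ω₂^2*ω₃*β^4 + 9/2*ω₁*β^2
          + 3/4*ω₁*ω₂ + 3/4*ω₁*ω₂*β^4 - 3/8*ω₁*ω₂^2*β^2)
        + (27*β^2 - 9/4*ω₃^2*β^2 + 9/2*ω₂ + 9/2*ω₂*β^4 - 3/8*ω₂*ω₃^2*β^4 - 9/4*ω₂^2*β^2
          + 3/4*ω₁*ω₃ + 3/4*ω₁*ω₃*β^4 + 9/4*ω₁*ω₂*ω₃*β^2 - 9/4*ω₁^2*β^2 - 3/8*ω₁^2*ω₂) * α^2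
        + (3/8 * (12*ω₃ + 2*ω₁*ω₂ - ω₁^2*ω₃) + 3/8 * β^2 * (12*ω₁ + 2*ω₃*ω₂ - ω₃^2*ω₁)) * α^4
        + 3/4*ω₁*ω₃ * α^6 := by
  simp only [Mmat, det_fin_three, of_apply, cons_val', cons_val_zero, cons_val_one, cons_val_two,
    head_cons, tail_cons, empty_val', cons_val_fin_one, head_fin_const]
  ring

theorem iteratedDeriv_four_det_Mmat (ω₁ ω₂ ω₃ β : ℝ) :
    iteratedDeriv 4 (fun α => (Mmat ω₁ ω₂ ω₃ α β).det) =
      fun α => 9 * (12*ω₃ + 2*ω₁*ω₂ - ω₁^2*ω₃) + 9 * β^2 * (12*ω₁ + 2*ω₃*ω₂ - ω₃^2*ω₁)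
        + 270 * ω₁ * ω₃ * α^2 := by
  funext α
  simp only [det_Mmat, iteratedDeriv_four_even_sextic]
  ring

theorem fourth_deriv_det_M_convex_nonneg (ω₁ ω₂ ω₃ β : ℝ)
    (h₁ : ω₁ ∈ Set.Icc (2 : ℝ) 4) (h₂ : ω₂ ∈ Set.Icc (2 : ℝ) 4)
    (h₃ : ω₃ ∈ Set.Icc (2 : ℝ) 4) :
    ConvexOn ℝ (Set.Icc (-1 : ℝ) 1)
      (iteratedDeriv 4 (fun α : ℝ => (Mmat ω₁ ω₂ ω₃ α β).det)) ∧
    ∀ α ∈ Set.Icc (-1 : ℝ) 1,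
      0 ≤ iteratedDeriv 4 (fun α : ℝ => (Mmat ω₁ ω₂ ω₃ α β).det) α := by
  obtain ⟨h₁l, h₁u⟩ := h₁
  obtain ⟨h₃l, h₃u⟩ := h₃
  have hA := sq_mul_le_twelve_mul_add_two_mul (by linarith) h₁u h₂.1 (by linarith) h₃u
  have hB := sq_mul_le_twelve_mul_add_two_mul (by linarith) h₃u h₂.1 (by linarith) h₁u
  have hc₆ : 0 ≤ 270 * ω₁ * ω₃ := by positivity
  rw [iteratedDeriv_four_det_Mmat]
  refine ⟨(convexOn_const_add_mul_sq _ hc₆).subset (subset_univ _) (convex_Icc _ _),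
    fun α _ => ?_⟩
  nlinarith [mul_nonneg (sq_nonneg β) (sub_nonneg.2 hB), mul_nonneg hc₆ (sq_nonneg α)]
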